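/- arXiv:cs/0503049 — 9 statements merged into one kernel-verified Lean document; each statement's English description precedes it below -/
import Mathlib

section
/- Let σ : ℕ → ℕ → ℕ be any total function, and define the partial function ρ : ℕ → ℕ → Option ℕ by ρ x y = some (σ (x−1) (y−1) + 1) if x ≥ 1 and y ≥ 1, and ρ x y = none otherwise. Then σ is associative (σ x (σ y z) = σ (σ x y) z for all x, y, z) if and only if ρ is associative in the Kleene sense: ρ̂ (ρ x y) (some z) = ρ̂ (some x) (ρ y z) for all x, y, z ∈ ℕ, where ρ̂ a b = Option.bind a (fun u => Option.bind b (fun v => ρ u v)). -/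
/-- The shift construction: `ρ x y = some (σ (x-1) (y-1) + 1)` if `x ≥ 1` and `y ≥ 1`,
and `none` otherwise (truncated subtraction on ℕ). -/
def shiftRho (σ : ℕ → ℕ → ℕ) (x y : ℕ) : Option ℕ :=
  if 1 ≤ x ∧ 1 ≤ y then some (σ (x - 1) (y - 1) + 1) else none

/-- Kleene extension of a partial two-ary function. -/
def kleeneHat (ρ : ℕ → ℕ → Option ℕ) (a b : Option ℕ) : Option ℕ :=
  Option.bind a (fun u => Option.bind b (fun v => ρ u v))

theorem stmt_1 (σ : ℕ → ℕ → ℕ) :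
    (∀ x y z, σ x (σ y z) = σ (σ x y) z) ↔
    (∀ x y z : ℕ,
      kleeneHat (shiftRho σ) (shiftRho σ x y) (some z) =
      kleeneHat (shiftRho σ) (some x) (shiftRho σ y z)) := by
  constructor
  · intro h x y z
    simp only [kleeneHat, shiftRho]
    by_cases hx : 1 ≤ x <;> by_cases hy : 1 ≤ y <;> by_cases hz : 1 ≤ z <;>
      simp_all [h]
  · intro h x y z
    have := h (x + 1) (y + 1) (z + 1)
    simp [kleeneHat, shiftRho] at this
    exact this.symm
end

section
/- Let σ : ℕ → ℕ → ℕ be total and commutative. Define ρ : ℕ → ℕ → ℕ by: ρ 0 0 = 1, ρ 1 1 = 0, ρ 0 1 = 0, ρ 1 0 = 0; ρ x y = 0 whenever min(x,y) ≤ 1 < max(x,y); and ρ x y = σ (x−2) (y−2) + 2 whenever x ≥ 2 and y ≥ 2. Then ρ is commutative, but ρ is not associative; in particular ρ 0 (ρ 0 1) = 1 ≠ 0 = ρ (ρ 0 0) 1. -/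
/-- The construction of Lemma "yyyn": `ρ 0 0 = 1`, `ρ 1 1 = 0`, `ρ 0 1 = 0`, `ρ 1 0 = 0`;
`ρ x y = 0` whenever `min x y ≤ 1 < max x y`; and `ρ x y = σ (x-2) (y-2) + 2`
whenever `x ≥ 2` and `y ≥ 2`. -/
def rhoYYYN (σ : ℕ → ℕ → ℕ) (x y : ℕ) : ℕ :=
  if 2 ≤ x ∧ 2 ≤ y then σ (x - 2) (y - 2) + 2
  else if x = 0 ∧ y = 0 then 1
  else 0

theorem stmt_2 (σ : ℕ → ℕ → ℕ) (hcomm : ∀ x y, σ x y = σ y x) :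
    (∀ x y, rhoYYYN σ x y = rhoYYYN σ y x) ∧
    ¬ (∀ x y z, rhoYYYN σ x (rhoYYYN σ y z) = rhoYYYN σ (rhoYYYN σ x y) z) ∧
    rhoYYYN σ 0 (rhoYYYN σ 0 1) = 1 ∧ rhoYYYN σ (rhoYYYN σ 0 0) 1 = 0 := by
  refine ⟨fun x y => ?_, fun h => ?_, by simp [rhoYYYN], by simp [rhoYYYN]⟩
  · unfold rhoYYYN
    by_cases h1 : 2 ≤ x ∧ 2 ≤ y
    · simp [h1, And.intro h1.2 h1.1, hcomm (x - 2) (y - 2)]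
    · have h1' : ¬(2 ≤ y ∧ 2 ≤ x) := fun h => h1 ⟨h.2, h.1⟩
      by_cases h2 : x = 0 ∧ y = 0
      · simp [h1, h1', h2.1, h2.2]
      · have h2' : ¬(y = 0 ∧ x = 0) := fun h => h2 ⟨h.2, h.1⟩
        simp [h1, h1', h2, h2']
  · have := h 0 0 1
    simp [rhoYYYN] at this
end

section
/- Let σ : ℕ → ℕ → ℕ be total and associative. Define ρ : ℕ → ℕ → ℕ by: ρ x y = y if x ∈ {1,2} and y ∈ {1,2}; ρ x y = σ (x−3) (y−3) + 3 if x ≥ 3 and y ≥ 3; and ρ x y = 0 otherwise. Then ρ is associative, but ρ is not commutative; in particular ρ 1 2 = 2 ≠ 1 = ρ 2 1. -/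
/-- The construction of Lemma "yyny": `ρ x y = y` if `x ∈ {1,2}` and `y ∈ {1,2}`;
`ρ x y = σ (x-3) (y-3) + 3` if `x ≥ 3` and `y ≥ 3`; and `ρ x y = 0` otherwise. -/
def rhoYYNY (σ : ℕ → ℕ → ℕ) (x y : ℕ) : ℕ :=
  if (x = 1 ∨ x = 2) ∧ (y = 1 ∨ y = 2) then y
  else if 3 ≤ x ∧ 3 ≤ y then σ (x - 3) (y - 3) + 3
  else 0

theorem stmt_3 (σ : ℕ → ℕ → ℕ) (hassoc : ∀ x y z, σ x (σ y z) = σ (σ x y) z) :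
    (∀ x y z, rhoYYNY σ x (rhoYYNY σ y z) = rhoYYNY σ (rhoYYNY σ x y) z) ∧
    ¬ (∀ x y, rhoYYNY σ x y = rhoYYNY σ y x) ∧
    rhoYYNY σ 1 2 = 2 ∧ rhoYYNY σ 2 1 = 1 := by
  refine ⟨?_, ?_, by simp [rhoYYNY], by simp [rhoYYNY]⟩
  · intro x y z
    simp only [rhoYYNY]
    split_ifs <;> first | rfl | omega | simp_all
  · intro h
    have := h 1 2
    simp [rhoYYNY] at this
end

section
/- For every function ρ : List Bool → List Bool, let σ x y = true :: ρ x if x = y, and σ x y = false :: (min x y ++ max x y) if x ≠ y (min and max with respect to the shortlex order). Define f₁ : List Bool → List Bool → List Bool by: f₁ x (true :: z) = x; f₁ x (false :: z) = z.drop x.length if z.take x.length = x and x < z.drop x.length in the shortlex order, and f₁ x (false :: z) = z.take (z.length − x.length) otherwise; f₁ x [] = []. Then f₁ inverts σ with respect to the first argument: σ x (f₁ x (σ x y)) = σ x y for all x, y. -/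
/-- Shortlex (length-lexicographic) strict order on binary strings:
`x < y` iff `|x| < |y|`, or `|x| = |y|` and `x` lexicographically precedes `y`
(with `false < true`). -/
def shortlexLt (x y : List Bool) : Prop :=
  x.length < y.length ∨ (x.length = y.length ∧ List.Lex (· < ·) x y)

instance : DecidableRel shortlexLt := fun x y => by
  unfold shortlexLt; infer_instance

/-- The shortlex-smaller of two binary strings. -/
def slMin (x y : List Bool) : List Bool := if shortlexLt x y then x else y

/-- The shortlex-larger of two binary strings. -/
def slMax (x y : List Bool) : List Bool := if shortlexLt x y then y else x

/-- The function of Lemma "nyyn": `σ x y = 1ρ(x)` if `x = y`, and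
`σ x y = 0 ⬝ min(x,y) ⬝ max(x,y)` if `x ≠ y` (shortlex min/max). -/
def sigmaNYYN (ρ : List Bool → List Bool) (x y : List Bool) : List Bool :=
  if x = y then true :: ρ x else false :: (slMin x y ++ slMax x y)

/-- The explicit inverter of `sigmaNYYN` with respect to the first argument. -/
def f1Inv (x : List Bool) : List Bool → List Bool
  | [] => []
  | true :: _ => x
  | false :: z =>
      if z.take x.length = x ∧ shortlexLt x (z.drop x.length) then z.drop x.length
      else z.take (z.length - x.length)

/-! For `x ≠ y` the word `σ x y` is `0 ⬝ min ⬝ max`, and `x` is one of the two blocks. The test in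
`f1Inv` recognises when `x` is the first block, the smaller one, and returns the second; otherwise
`x` is the last block and the prefix before it is returned. On the diagonal `f1Inv` returns `x`. -/

theorem shortlexLt_irrefl (x : List Bool) : ¬ shortlexLt x x := by
  rintro (h | ⟨-, h⟩)
  · exact lt_irrefl _ h
  · exact irrefl_of (List.Lex (· < ·)) x h

theorem shortlexLt_or_shortlexLt_of_ne {x y : List Bool} (h : x ≠ y) :
    shortlexLt x y ∨ shortlexLt y x := by
  rcases Nat.lt_trichotomy x.length y.length with hl | hl | hl
  · exact .inl (.inl hl)
  · rcases trichotomous_of (List.Lex (· < ·)) x y with hx | hx | hx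
    · exact .inl (.inr ⟨hl, hx⟩)
    · exact absurd hx h
    · exact .inr (.inr ⟨hl.symm, hx⟩)
  · exact .inr (.inl hl)

theorem shortlexLt.length_le {x y : List Bool} (h : shortlexLt x y) : x.length ≤ y.length :=
  h.elim le_of_lt fun h => h.1.le

theorem f1Inv_false_cons_self_append {x y : List Bool} (h : shortlexLt x y) :
    f1Inv x (false :: (x ++ y)) = y := by
  simp [f1Inv, h]

theorem f1Inv_false_cons_append_self {x y : List Bool} (h : shortlexLt y x) :
    f1Inv x (false :: (y ++ x)) = y := by
  -- The suffix after `|x|` letters has length `|y| ≤ |x|`, so `x <` it forces `|y| = |x|`, and then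
  -- the prefix of length `|x|` is `y` itself.
  have hy : ¬ ((y ++ x).take x.length = x ∧ shortlexLt x ((y ++ x).drop x.length)) := by
    rintro ⟨htake, hlt⟩
    have hlen : y.length = x.length := by
      have := hlt.length_le
      simp only [List.length_drop, List.length_append] at this
      exact le_antisymm h.length_le (by omega)
    rw [← hlen, List.take_left] at htake
    exact shortlexLt_irrefl y (htake ▸ h)
  simp [f1Inv, hy]

theorem f1Inv_sigmaNYYN_of_ne (ρ : List Bool → List Bool) {x y : List Bool} (h : x ≠ y) :
    f1Inv x (sigmaNYYN ρ x y) = y := by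
  rw [sigmaNYYN, if_neg h, slMin, slMax]
  by_cases hxy : shortlexLt x y
  · rw [if_pos hxy, if_pos hxy, f1Inv_false_cons_self_append hxy]
  · have hyx := (shortlexLt_or_shortlexLt_of_ne h).resolve_left hxy
    rw [if_neg hxy, if_neg hxy, f1Inv_false_cons_append_self hyx]

theorem stmt_6 (ρ : List Bool → List Bool) :
    ∀ x y, sigmaNYYN ρ x (f1Inv x (sigmaNYYN ρ x y)) = sigmaNYYN ρ x y := by
  intro x y
  by_cases h : x = y
  · simp [sigmaNYYN, f1Inv, h]
  · rw [f1Inv_sigmaNYYN_of_ne ρ h]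
end

section
/- For every function ρ : List Bool → List Bool, the function σ defined by σ x y = true :: ρ x if x = y, and σ x y = false :: (min x y ++ max x y) if x ≠ y (min and max with respect to the shortlex order), is s-honest with the linear bound p(n) = n: (a) for all x, z, if there exists y with σ x y = z, then there exists ŷ with σ x ŷ = z and |ŷ| ≤ |x| + |z|; and (b) for all y, z, if there exists x with σ x y = z, then there exists x̂ with σ x̂ y = z and |x̂| ≤ |y| + |z|. -/
theorem stmt_7 (ρ : List Bool → List Bool) :
    (∀ x z, (∃ y, sigmaNYYN ρ x y = z) →
      ∃ yh, sigmaNYYN ρ x yh = z ∧ yh.length ≤ x.length + z.length) ∧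
    (∀ y z, (∃ x, sigmaNYYN ρ x y = z) →
      ∃ xh, sigmaNYYN ρ xh y = z ∧ xh.length ≤ y.length + z.length) := by
  have hlen : ∀ x y : List Bool, (slMin x y ++ slMax x y).length = x.length + y.length := by
    intro x y
    unfold slMin slMax
    by_cases h : shortlexLt x y <;> simp [h, Nat.add_comm]
  constructor
  · rintro x z ⟨y, rfl⟩
    refine ⟨y, rfl, ?_⟩
    unfold sigmaNYYN
    by_cases h : x = y
    · simp [h]
    · simp only [if_neg h, List.length_cons, hlen]
      omega
  · rintro y z ⟨x, rfl⟩
    refine ⟨x, rfl, ?_⟩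
    unfold sigmaNYYN
    by_cases h : x = y
    · simp [h]
    · simp only [if_neg h, List.length_cons, hlen]
      omega
end

section
/- If ρ : List Bool → List Bool is honest, i.e., there is a polynomial p with natural coefficients such that for every z in the image of ρ there exists x with ρ x = z and |x| ≤ p(|z|), then the function σ defined by σ x y = true :: ρ x if x = y, and σ x y = false :: (min x y ++ max x y) if x ≠ y (min and max with respect to the shortlex order), is honest: there is a polynomial q with natural coefficients such that for every z in the image of σ there exist x, y with σ x y = z and |x| + |y| ≤ q(|z|). -/
lemma nat_poly_eval_mono (p : Polynomial ℕ)  {a b : ℕ} (hab : a ≤ b) : p.eval a ≤ p.eval b := by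
  simp only [Polynomial.eval_eq_sum_range]
  exact Finset.sum_le_sum fun i _ =>
    Nat.mul_le_mul_left _ (Nat.pow_le_pow_left hab i)

theorem stmt_8 (ρ : List Bool → List Bool)
    (hρ : ∃ p : Polynomial ℕ, ∀ z, (∃ x, ρ x = z) →
      ∃ x, ρ x = z ∧ x.length ≤ p.eval z.length) :
    ∃ q : Polynomial ℕ, ∀ z, (∃ x y, sigmaNYYN ρ x y = z) →
      ∃ x y, sigmaNYYN ρ x y = z ∧ x.length + y.length ≤ q.eval z.length := by
  obtain ⟨p, hp⟩ := hρ
  refine ⟨2 * p + Polynomial.X, ?_⟩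
  rintro z ⟨x, y, hxy⟩
  by_cases hxyeq : x = y
  · subst hxyeq
    have hz : z = true :: ρ x := by simpa [sigmaNYYN] using hxy.symm
    obtain ⟨x', hx', hlen⟩ := hp (ρ x) ⟨x, rfl⟩
    refine ⟨x', x', ?_, ?_⟩
    · simp [sigmaNYYN, hx', hz]
    · have h1 : (ρ x).length ≤ z.length := by simp [hz]
      have h2 := hlen.trans (nat_poly_eval_mono p h1)
      simp only [Polynomial.eval_add, Polynomial.eval_mul, Polynomial.eval_X,
        Polynomial.eval_ofNat]
      omega
  · refine ⟨x, y, hxy, ?_⟩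
    have hz : z = false :: (slMin x y ++ slMax x y) := by
      simpa [sigmaNYYN, hxyeq] using hxy.symm
    have hlen : x.length + y.length ≤ z.length := by
      have : (slMin x y).length + (slMax x y).length = x.length + y.length := by
        unfold slMin slMax; split <;> omega
      simp [hz]; omega
    simp only [Polynomial.eval_add, Polynomial.eval_mul, Polynomial.eval_X,
      Polynomial.eval_ofNat]
    omega
end

section
/- For every function ρ : List Bool → List Bool, the function σ defined by σ x y = true :: ρ x if x = y, and σ x y = false :: (x ++ y) if x ≠ y, is s-honest with the linear bound p(n) = n: (a) for all x, z, if there exists y with σ x y = z, then there exists ŷ with σ x ŷ = z and |ŷ| ≤ |x| + |z|; and (b) for all y, z, if there exists x with σ x y = z, then there exists x̂ with σ x̂ y = z and |x̂| ≤ |y| + |z|. -/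
/-- The function of Lemma "nynn": `σ x y = 1ρ(x)` if `x = y`, and `σ x y = 0xy` if `x ≠ y`. -/
def sigmaNYNN (ρ : List Bool → List Bool) (x y : List Bool) : List Bool :=
  if x = y then true :: ρ x else false :: (x ++ y)

theorem stmt_11 (ρ : List Bool → List Bool) :
    (∀ x z, (∃ y, sigmaNYNN ρ x y = z) →
      ∃ yh, sigmaNYNN ρ x yh = z ∧ yh.length ≤ x.length + z.length) ∧
    (∀ y z, (∃ x, sigmaNYNN ρ x y = z) →
      ∃ xh, sigmaNYNN ρ xh y = z ∧ xh.length ≤ y.length + z.length) := by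
  constructor
  · rintro x z ⟨y, hy⟩
    refine ⟨y, hy, ?_⟩
    by_cases h : x = y
    · subst h; omega
    · simp [sigmaNYNN, h] at hy
      subst hy
      simp [sigmaNYNN, h]
      omega
  · rintro y z ⟨x, hx⟩
    refine ⟨x, hx, ?_⟩
    by_cases h : x = y
    · subst h; omega
    · simp [sigmaNYNN, h] at hx
      subst hx
      simp [sigmaNYNN, h]
      omega
end

section
/- For every function f : List Bool → List Bool, the function g : List Bool → List Bool → List Bool defined by g x y = false :: f a if there exists a with x = true :: a and y = x, and g x y = [] otherwise, is commutative and associative; in fact g a (g b c) = [] = g (g a b) c for all a, b, c. -/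
/-- The function of Lemma "foo-new": `g x y = 0 ⬝ f(a)` if there exists `a` with
`x = 1a` and `y = x`, and `g x y = ε` otherwise. -/
def gNYYY (f : List Bool → List Bool) (x y : List Bool) : List Bool :=
  match x with
  | true :: a => if y = true :: a then false :: f a else []
  | _ => []

lemma gNYYY_left (f : List Bool → List Bool) (x y : List Bool) :
    gNYYY f (gNYYY f x y) z = [] := by
  unfold gNYYY
  rcases x with _ | ⟨_ | _, a⟩ <;> simp
  by_cases h : y = true :: a <;> simp [h]

lemma gNYYY_right (f : List Bool → List Bool) (x y z : List Bool) :
    gNYYY f x (gNYYY f y z) = [] := by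
  unfold gNYYY
  rcases x with _ | ⟨_ | _, a⟩ <;> simp
  rcases y with _ | ⟨_ | _, b⟩ <;> simp <;> split <;> simp

theorem stmt_12 (f : List Bool → List Bool) :
    (∀ x y, gNYYY f x y = gNYYY f y x) ∧
    (∀ x y z, gNYYY f x (gNYYY f y z) = gNYYY f (gNYYY f x y) z) ∧
    (∀ a b c, gNYYY f a (gNYYY f b c) = [] ∧ gNYYY f (gNYYY f a b) c = []) := by
  refine ⟨?_, fun x y z => by rw [gNYYY_left, gNYYY_right],
    fun a b c => ⟨gNYYY_right f a b c, gNYYY_left f a b⟩⟩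
  intro x y
  unfold gNYYY
  rcases x with _ | ⟨_ | _, a⟩ <;> rcases y with _ | ⟨_ | _, b⟩ <;> simp
  by_cases h : a = b
  · subst h; simp
  · simp [h, Ne.symm h]
end

section
/- For every function f : List Bool → List Bool, let g x y = false :: f a if there exists a with x = true :: a and y = x, and g x y = [] otherwise. Define h : List Bool → List Bool → List Bool by h x z = [] if z = [], and h x z = x otherwise. Then h inverts g with respect to the first argument: g x (h x (g x y)) = g x y for all x, y. -/
/-- The explicit inverter of `gNYYY` with respect to the first argument:
`h x z = ε` if `z = ε`, and `h x z = x` otherwise. -/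
def hInv (x z : List Bool) : List Bool := if z = [] then [] else x

theorem stmt_13 (f : List Bool → List Bool) :
    ∀ x y, gNYYY f x (hInv x (gNYYY f x y)) = gNYYY f x y := by
  intro x y
  match x with
  | [] => simp [gNYYY, hInv]
  | false :: a => simp [gNYYY, hInv]
  | true :: a =>
    by_cases h : y = true :: a <;> simp [gNYYY, hInv, h]
end
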